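/- arXiv:1807.02025 — 2 statements merged into one kernel-verified Lean document; each statement's English description precedes it below -/
import Mathlib

section
/- Let λ₁ > 0, λ₂ ≠ 0 with ε₁ = 16π·λ₁²/λ₂². Let W, A > 0, V be reals with W ≥ 8π, |V| ≤ A^{3/2}/(6√π), A ≤ ε₁, and W + λ₁A + λ₂V ≤ E₀ where E₀ < 8π + 16π·λ₁³/(3λ₂²). Then A ≤ (3/λ₁)(E₀ - 8π) < ε₁. -/
/-! If the surface is not embedded, Li–Yau gives `W ≥ 8π`. The isoperimetric inequality together
with the a priori bound `A λ₂² ≤ 16π λ₁²` controls the volume term: `|λ₂ V| ≤ (2/3) λ₁ A`.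
Hence `8π + λ₁ A / 3 ≤ E₀`, which bounds `A` by `(3/λ₁)(E₀ - 8π)`, and the energy threshold
`E₀ < 8π + 16π λ₁³/(3λ₂²)` makes this bound strictly smaller than `ε₁ = 16π λ₁²/λ₂²`. -/

open Real

lemma Real.rpow_three_halves {A : ℝ} (hA : 0 ≤ A) : A ^ ((3 : ℝ) / 2) = A * √A := by
  rw [show (3 : ℝ) / 2 = 1 + 1 / 2 by norm_num, rpow_add' hA (by norm_num), rpow_one,
    sqrt_eq_rpow]

lemma abs_mul_sqrt_le_of_mul_sq_le {A μ l : ℝ} (hl : 0 ≤ l)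
    (h : A * μ ^ 2 ≤ 16 * π * l ^ 2) : |μ| * √A ≤ 4 * √π * l := by
  have hsqrt := Real.sqrt_le_sqrt h
  rwa [mul_comm, sqrt_mul (sq_nonneg μ), sqrt_sq_eq_abs, sqrt_mul (by positivity),
    sqrt_mul (by positivity), sqrt_sq hl, show (16 : ℝ) = 4 ^ 2 by norm_num,
    sqrt_sq (by norm_num)] at hsqrt

lemma abs_mul_le_of_isoperimetric {A V μ l : ℝ} (hA : 0 ≤ A) (hl : 0 ≤ l)
    (hiso : |V| ≤ A ^ ((3 : ℝ) / 2) / (6 * √π)) (hsmall : A * μ ^ 2 ≤ 16 * π * l ^ 2) :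
    |μ * V| ≤ 2 / 3 * l * A := by
  have hπ : 0 < √π := sqrt_pos.mpr pi_pos
  have hμA := abs_mul_sqrt_le_of_mul_sq_le hl hsmall
  calc |μ * V| = |μ| * |V| := abs_mul μ V
    _ ≤ |μ| * (A * √A / (6 * √π)) := by
        rw [← rpow_three_halves hA]; exact mul_le_mul_of_nonneg_left hiso (abs_nonneg μ)
    _ = A * (|μ| * √A) / (6 * √π) := by ring
    _ ≤ A * (4 * √π * l) / (6 * √π) := by gcongr
    _ = 2 / 3 * l * A := by field_simp; ring

theorem stmt9_general (lam1 lam2 W A V E0 : ℝ) (hlam1 : 0 < lam1)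
    (hA : 0 < A) (hW : 8 * π ≤ W)
    (hiso : |V| ≤ A ^ ((3:ℝ)/2) / (6 * Real.sqrt π))
    (hAbound : A ≤ 16 * π * lam1^2 / lam2^2)
    (hE : W + lam1 * A + lam2 * V ≤ E0)
    (hE0 : E0 < 8 * π + 16 * π * lam1^3 / (3 * lam2^2)) :
    A ≤ (3 / lam1) * (E0 - 8 * π) ∧ (3 / lam1) * (E0 - 8 * π) < 16 * π * lam1^2 / lam2^2 := by
  have hsmall : A * lam2 ^ 2 ≤ 16 * π * lam1 ^ 2 :=
    mul_le_of_le_div₀ (by positivity) (sq_nonneg lam2) hAbound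
  have hV := abs_mul_le_of_isoperimetric hA.le hlam1.le hiso hsmall
  have hgap : lam1 * A / 3 ≤ E0 - 8 * π := by linarith [neg_abs_le (lam2 * V)]
  constructor
  · rw [div_mul_eq_mul_div, le_div_iff₀ hlam1]
    linarith
  · calc 3 / lam1 * (E0 - 8 * π) < 3 / lam1 * (16 * π * lam1 ^ 3 / (3 * lam2 ^ 2)) := by
          gcongr; linarith
      _ = 16 * π * lam1 ^ 2 / lam2 ^ 2 := by field_simp

theorem stmt9 (lam1 lam2 W A V E0 : ℝ) (hlam1 : 0 < lam1) (hlam2 : lam2 ≠ 0)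
    (hA : 0 < A) (hW : 8 * π ≤ W)
    (hiso : |V| ≤ A ^ ((3:ℝ)/2) / (6 * Real.sqrt π))
    (hAbound : A ≤ 16 * π * lam1^2 / lam2^2)
    (hE : W + lam1 * A + lam2 * V ≤ E0)
    (hE0 : E0 < 8 * π + 16 * π * lam1^3 / (3 * lam2^2)) :
    A ≤ (3 / lam1) * (E0 - 8 * π) ∧ (3 / lam1) * (E0 - 8 * π) < 16 * π * lam1^2 / lam2^2 :=
  stmt9_general lam1 lam2 W A V E0 hlam1 hA hW hiso hAbound hE hE0
end

section
/- Let g, W, A, D, λ₁ > 0, λ₂ ∈ ℝ, V ∈ ℝ satisfy 2λ₁A + 3λ₂V ≤ g·D·√A, D ≤ (2/π)√(A·W), and |V| ≤ A^{3/2}/(6√π). If A ≤ 16π·λ₁²/λ₂² (λ₂ ≠ 0), then g² ≥ π²(λ₁ - |λ₂|√A/(4√π))²/W. -/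
open Real

/-!
With `k = λ₁ - |λ₂|√A/(4√π)`, the isoperimetric bound turns the volume term into
`3λ₂V ≥ -|λ₂|A√A/(2√π)`, so the left side of the dilation inequality is at least `2Ak`, while
the diameter bound makes its right side at most `2A·g√W/π`. Hence `πk ≤ g√W`; the bound on `A`
makes `k ≥ 0`, so the inequality can be squared.
-/

theorem two_mul_mul_sub_le_of_abs_le {A V lam1 lam2 : ℝ} (hA : 0 ≤ A)
    (hV : |V| ≤ A ^ ((3 : ℝ) / 2) / (6 * √π)) :
    2 * A * (lam1 - |lam2| * √A / (4 * √π)) ≤ 2 * lam1 * A + 3 * lam2 * V := by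
  have hpow : A ^ ((3 : ℝ) / 2) = A * √A := by
    rw [rpow_div_two_eq_sqrt _ hA, show (3 : ℝ) = (3 : ℕ) by norm_num, rpow_natCast,
      pow_succ, sq_sqrt hA]
  have hlam2V : -(|lam2| * (A * √A / (6 * √π))) ≤ lam2 * V :=
    calc -(|lam2| * (A * √A / (6 * √π))) ≤ -(|lam2| * |V|) := by
          rw [← hpow]; exact neg_le_neg (mul_le_mul_of_nonneg_left hV (abs_nonneg _))
      _ ≤ lam2 * V := by rw [← abs_mul]; exact neg_abs_le _
  have hπ : 0 < √π := sqrt_pos.mpr pi_pos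
  calc 2 * A * (lam1 - |lam2| * √A / (4 * √π))
      = 2 * lam1 * A + 3 * -(|lam2| * (A * √A / (6 * √π))) := by field_simp; ring
    _ ≤ 2 * lam1 * A + 3 * lam2 * V := by linarith

theorem mul_mul_sqrt_le_of_le_sqrt_mul {g D A W : ℝ} (hg : 0 ≤ g) (hA : 0 ≤ A)
    (hD : D ≤ 2 / π * √(A * W)) :
    g * D * √A ≤ 2 * A * (g * √W / π) := by
  calc g * D * √A ≤ g * (2 / π * (√A * √W)) * √A := by
        rw [← sqrt_mul hA]; gcongr
    _ = 2 * (√A * √A) * (g * √W / π) := by ring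
    _ = 2 * A * (g * √W / π) := by rw [mul_self_sqrt hA]

theorem sub_mul_sqrt_div_nonneg {A lam1 lam2 : ℝ} (hA : 0 ≤ A) (hlam1 : 0 ≤ lam1)
    (hAbound : A ≤ 16 * π * lam1 ^ 2 / lam2 ^ 2) :
    0 ≤ lam1 - |lam2| * √A / (4 * √π) := by
  have hsq : (|lam2| * √A) ^ 2 ≤ (4 * √π * lam1) ^ 2 := by
    rw [mul_pow, mul_pow, mul_pow, sq_abs, sq_sqrt hA, sq_sqrt pi_pos.le, mul_comm]
    linarith [mul_le_of_le_div₀ (by positivity) (sq_nonneg lam2) hAbound]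
  have hle := (pow_le_pow_iff_left₀ (by positivity) (by positivity) two_ne_zero).mp hsq
  rw [sub_nonneg, div_le_iff₀ (by positivity)]
  linarith

theorem stmt12_general (g W A D lam1 lam2 V : ℝ) (hg : 0 < g) (hW : 0 < W) (hA : 0 < A)
    (hlam1 : 0 < lam1)
    (h1 : 2 * lam1 * A + 3 * lam2 * V ≤ g * D * Real.sqrt A)
    (h2 : D ≤ (2 / π) * Real.sqrt (A * W))
    (hiso : |V| ≤ A ^ ((3:ℝ)/2) / (6 * Real.sqrt π))
    (hAbound : A ≤ 16 * π * lam1^2 / lam2^2) :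
    g^2 ≥ π^2 * (lam1 - |lam2| * Real.sqrt A / (4 * Real.sqrt π))^2 / W := by
  set k := lam1 - |lam2| * √A / (4 * √π)
  have hk : 0 ≤ k := sub_mul_sqrt_div_nonneg hA.le hlam1.le hAbound
  have hchain : 2 * A * k ≤ 2 * A * (g * √W / π) :=
    (two_mul_mul_sub_le_of_abs_le hA.le hiso).trans
      (h1.trans (mul_mul_sqrt_le_of_le_sqrt_mul hg.le hA.le h2))
  have hπk : π * k ≤ g * √W := by
    rw [← le_div_iff₀' pi_pos]
    exact le_of_mul_le_mul_left hchain (by positivity)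
  have hsq := pow_le_pow_left₀ (by positivity) hπk 2
  rw [ge_iff_le, div_le_iff₀ hW]
  calc π ^ 2 * k ^ 2 = (π * k) ^ 2 := by ring
    _ ≤ (g * √W) ^ 2 := hsq
    _ = g ^ 2 * W := by rw [mul_pow, sq_sqrt hW.le]

theorem stmt12 (g W A D lam1 lam2 V : ℝ) (hg : 0 < g) (hW : 0 < W) (hA : 0 < A)
    (hD : 0 < D) (hlam1 : 0 < lam1) (hlam2 : lam2 ≠ 0)
    (h1 : 2 * lam1 * A + 3 * lam2 * V ≤ g * D * Real.sqrt A)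
    (h2 : D ≤ (2 / π) * Real.sqrt (A * W))
    (hiso : |V| ≤ A ^ ((3:ℝ)/2) / (6 * Real.sqrt π))
    (hAbound : A ≤ 16 * π * lam1^2 / lam2^2) :
    g^2 ≥ π^2 * (lam1 - |lam2| * Real.sqrt A / (4 * Real.sqrt π))^2 / W :=
  stmt12_general g W A D lam1 lam2 V hg hW hA hlam1 h1 h2 hiso hAbound
end
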